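/- Let m > 0. The limit δm := lim_{q → 0⁺} δE(q) exists and is a finite real number (the renormalised second-order mass correction). -/

import Mathlib

open MeasureTheory

/-- The one-particle energy `ω(p) = √(p² + m²)`. -/
noncomputable def ω (m p : ℝ) : ℝ := Real.sqrt (p ^ 2 + m ^ 2)

/-- `Ω(p,q,θ) = √(p² + q² + 2pq cos θ + m²)` in spherical coordinates. -/
noncomputable def Ω (m p q c : ℝ) : ℝ := Real.sqrt (p ^ 2 + q ^ 2 + 2 * p * q * c + m ^ 2)

/-- Integrand of the noncommutative second-order energy correction in spherical
coordinates (`c = cos θ`). -/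
noncomputable def F (m q p c : ℝ) : ℝ :=
  p ^ 2 * Real.exp (-(10 / 3) * p ^ 2) * Real.exp (-(8 / 3) * q * p * c) *
    Real.exp (-(ω m p) * Ω m p q c + ω m p * ω m q) / (ω m p * Ω m p q c) *
    (Real.exp (Ω m p q c * ω m q) / (ω m p + Ω m p q c - ω m q) +
      Real.exp (-(Ω m p q c) * ω m q) / (ω m p + Ω m p q c + ω m q))

/-- The noncommutative second-order energy correction `δE(q)`. -/
noncomputable def δE (m q : ℝ) : ℝ :=
  Real.exp (-(10 / 3) * q ^ 2 - 2 * m) / (16 * (2 * Real.pi) ^ 5 * ω m q) *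
    ∫ p in Set.Ioi (0 : ℝ), ∫ c in (-1 : ℝ)..1, F m q p c

/-!
The integrand `F m q p c` is continuous in `q` at `q = 0`, and for `|q| ≤ min 1 (m / 2)` and
`|c| ≤ 1` it is dominated by `C · p² e^{-p²}`: the denominators are bounded below by `m²`,
`m / 2` and `m` (since `ω(q) ≤ Ω(p,q,c) + |q|`), and the growth `e^{O(|p|)}` of the
numerators is absorbed by the Gaussian `e^{-(10/3) p²}`. Dominated convergence makes `δE m`
continuous at `0`, so the limit is `δE m 0`.
-/

open Filter Topology Set Function Interval

theorem continuousAt_integral_intervalIntegral_of_dominated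
    {X α E : Type*} [TopologicalSpace X] [FirstCountableTopology X] [MeasurableSpace α]
    {μ : Measure α} [SFinite μ] [NormedAddCommGroup E] [NormedSpace ℝ E]
    {G : X → α → ℝ → E} {bound : α → ℝ} {x₀ : X} {a b : ℝ}
    (hG_meas : ∀ x, StronglyMeasurable (uncurry (G x)))
    (h_bound : ∀ᶠ x in 𝓝 x₀, ∀ y, ∀ t ∈ Ι a b, ‖G x y t‖ ≤ bound y)
    (bound_integrable : Integrable bound μ)
    (h_cont : ∀ y, ∀ t ∈ Ι a b, ContinuousAt (fun x => G x y t) x₀) :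
    ContinuousAt (fun x => ∫ y, (∫ t in a..b, G x y t) ∂μ) x₀ := by
  refine continuousAt_of_dominated (bound := fun y => bound y * |b - a|) ?_ ?_
    (bound_integrable.mul_const _) (ae_of_all _ fun y => ?_)
  · refine Eventually.of_forall fun x => ?_
    exact ((hG_meas x).integral_prod_right.sub
      (hG_meas x).integral_prod_right).aestronglyMeasurable
  · filter_upwards [h_bound] with x hx
    exact ae_of_all _ fun y => intervalIntegral.norm_integral_le_of_norm_le_const (hx y)
  · refine intervalIntegral.continuousAt_of_dominated_interval
      (Eventually.of_forall fun x =>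
        ((hG_meas x).comp_measurable measurable_prodMk_left).aestronglyMeasurable) ?_
      (intervalIntegrable_const (c := bound y)) (ae_of_all _ (h_cont y))
    filter_upwards [h_bound] with x hx
    exact ae_of_all _ (hx y)

lemma abs_le_of_mem_uIoc_neg {a c : ℝ} (ha : 0 ≤ a) (hc : c ∈ Ι (-a) a) : |c| ≤ a := by
  rw [uIoc_of_le (by linarith)] at hc
  exact abs_le.mpr ⟨hc.1.le, hc.2⟩

section Integrand

variable {m p q c : ℝ}

lemma ω_nonneg (m p : ℝ) : 0 ≤ ω m p := Real.sqrt_nonneg _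

lemma Ω_nonneg (m p q c : ℝ) : 0 ≤ Ω m p q c := Real.sqrt_nonneg _

lemma le_ω (m p : ℝ) : m ≤ ω m p :=
  (le_abs_self m).trans <| (Real.sqrt_sq_eq_abs m).symm.trans_le <|
    Real.sqrt_le_sqrt (by nlinarith [sq_nonneg p])

lemma ω_le_abs_add (hm : 0 ≤ m) (p : ℝ) : ω m p ≤ |p| + m :=
  Real.sqrt_le_iff.mpr ⟨by positivity, by nlinarith [sq_abs p, abs_nonneg p]⟩

lemma abs_mul_mul_le (hc : |c| ≤ 1) : |p * q * c| ≤ |p| * |q| := by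
  rw [abs_mul, abs_mul]
  exact mul_le_of_le_one_right (by positivity) hc

lemma sq_le_Ω_arg (hc : |c| ≤ 1) : m ^ 2 ≤ p ^ 2 + q ^ 2 + 2 * p * q * c + m ^ 2 := by
  have := (abs_le.mp (abs_mul_mul_le (p := p) (q := q) hc)).1
  nlinarith [sq_nonneg (|p| - |q|), sq_abs p, sq_abs q]

lemma le_Ω (hc : |c| ≤ 1) : m ≤ Ω m p q c :=
  (le_abs_self m).trans <| (Real.sqrt_sq_eq_abs m).symm.trans_le <|
    Real.sqrt_le_sqrt (sq_le_Ω_arg hc)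

lemma Ω_le_abs_add (hm : 0 ≤ m) (hc : |c| ≤ 1) : Ω m p q c ≤ |p| + |q| + m := by
  have := (abs_le.mp (abs_mul_mul_le (p := p) (q := q) hc)).2
  refine Real.sqrt_le_iff.mpr ⟨by positivity, ?_⟩
  nlinarith [sq_abs p, sq_abs q, mul_nonneg (abs_nonneg p) hm, mul_nonneg (abs_nonneg q) hm,
    mul_nonneg (abs_nonneg p) (abs_nonneg q)]

lemma ω_le_Ω_add_abs (hc : |c| ≤ 1) : ω m q ≤ Ω m p q c + |q| := by
  have hΩ : Ω m p q c ^ 2 = p ^ 2 + q ^ 2 + 2 * p * q * c + m ^ 2 :=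
    Real.sq_sqrt ((sq_nonneg m).trans (sq_le_Ω_arg hc))
  have hΩ0 := Ω_nonneg m p q c
  refine Real.sqrt_le_iff.mpr ⟨by positivity, ?_⟩
  nlinarith [sq_le_Ω_arg (m := m) (p := p) (q := q) hc, sq_abs q, mul_nonneg hΩ0 (abs_nonneg q)]

lemma half_le_ω_add_Ω_sub_ω (hq : |q| ≤ m / 2) (hc : |c| ≤ 1) :
    m / 2 ≤ ω m p + Ω m p q c - ω m q := by
  linarith [le_ω m p, ω_le_Ω_add_abs (m := m) (p := p) (q := q) hc]

noncomputable def majorant (m p : ℝ) : ℝ :=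
  3 / m ^ 3 * Real.exp (3 / 28 * (14 / 3 + 2 * m) ^ 2 + (2 * m + 1) * (1 + m)) *
    (p ^ 2 * Real.exp (-1 * p ^ 2))

lemma integrable_majorant (m : ℝ) : Integrable (majorant m) := by
  refine Integrable.const_mul ?_ _
  simpa using integrable_rpow_mul_exp_neg_mul_sq one_pos (s := 2) (by norm_num)

lemma F_bracket_le (hm : 0 < m) (hq : |q| ≤ m / 2) (hc : |c| ≤ 1) :
    Real.exp (Ω m p q c * ω m q) / (ω m p + Ω m p q c - ω m q) +
        Real.exp (-(Ω m p q c) * ω m q) / (ω m p + Ω m p q c + ω m q) ≤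
      3 / m * Real.exp (Ω m p q c * ω m q) := by
  have hΩω : 0 ≤ Ω m p q c * ω m q := mul_nonneg (Ω_nonneg ..) (ω_nonneg ..)
  have h₁ := half_le_ω_add_Ω_sub_ω (p := p) hq hc
  have h₂ : m ≤ ω m p + Ω m p q c + ω m q := by
    linarith [le_ω m p, le_Ω (m := m) (p := p) (q := q) hc, le_ω m q]
  have h_exp : Real.exp (-(Ω m p q c) * ω m q) ≤ Real.exp (Ω m p q c * ω m q) :=
    Real.exp_le_exp.mpr (by linarith)
  calc _ ≤ Real.exp (Ω m p q c * ω m q) / (m / 2) + Real.exp (Ω m p q c * ω m q) / m :=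
        add_le_add (div_le_div_of_nonneg_left (Real.exp_nonneg _) (by positivity) h₁)
          (div_le_div₀ (Real.exp_nonneg _) h_exp hm h₂)
    _ = 3 / m * Real.exp (Ω m p q c * ω m q) := by field_simp; ring

lemma F_bracket_nonneg (hm : 0 < m) (hq : |q| ≤ m / 2) (hc : |c| ≤ 1) :
    0 ≤ Real.exp (Ω m p q c * ω m q) / (ω m p + Ω m p q c - ω m q) +
        Real.exp (-(Ω m p q c) * ω m q) / (ω m p + Ω m p q c + ω m q) := by
  have h₁ := half_le_ω_add_Ω_sub_ω (p := p) hq hc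
  have h₂ := ω_nonneg m q
  exact add_nonneg (div_nonneg (Real.exp_nonneg _) (by linarith))
    (div_nonneg (Real.exp_nonneg _) (by linarith))

lemma F_nonneg (hm : 0 < m) (hq : |q| ≤ m / 2) (hc : |c| ≤ 1) : 0 ≤ F m q p c :=
  mul_nonneg (div_nonneg (by positivity) (mul_nonneg (ω_nonneg ..) (Ω_nonneg ..)))
    (F_bracket_nonneg hm hq hc)

lemma F_exponent_le (hm : 0 ≤ m) (hq : |q| ≤ 1) (hc : |c| ≤ 1) :
    -(10 / 3) * p ^ 2 + -(8 / 3) * q * p * c + (-(ω m p) * Ω m p q c + ω m p * ω m q) +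
        Ω m p q c * ω m q ≤
      3 / 28 * (14 / 3 + 2 * m) ^ 2 + (2 * m + 1) * (1 + m) + -1 * p ^ 2 := by
  have h_qpc : -(8 / 3) * q * p * c ≤ 8 / 3 * |p| := by
    have := (abs_le.mp (abs_mul_mul_le (p := p) (q := q) hc)).1
    nlinarith [abs_nonneg p]
  have h_ωq : ω m q ≤ 1 + m := (ω_le_abs_add hm q).trans (by linarith)
  have h_ωp := ω_le_abs_add hm p
  have h_Ω : Ω m p q c ≤ |p| + 1 + m := (Ω_le_abs_add hm hc).trans (by linarith)
  have h₁ : 0 ≤ ω m p * Ω m p q c := mul_nonneg (ω_nonneg ..) (Ω_nonneg ..)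
  have h₂ : ω m p * ω m q ≤ (|p| + m) * (1 + m) :=
    mul_le_mul h_ωp h_ωq (ω_nonneg m q) (by positivity)
  have h₃ : Ω m p q c * ω m q ≤ (|p| + 1 + m) * (1 + m) :=
    mul_le_mul h_Ω h_ωq (ω_nonneg m q) (by positivity)
  -- complete the square: `(7/3) p² - a |p| ≥ -(3/28) a²` with `a = 14/3 + 2m`
  nlinarith [sq_nonneg (|p| - 3 * (14 / 3 + 2 * m) / 14), sq_abs p]

lemma F_le_majorant (hm : 0 < m) (hq₁ : |q| ≤ 1) (hq₂ : |q| ≤ m / 2) (hc : |c| ≤ 1) :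
    F m q p c ≤ majorant m p := by
  have h_den : m ^ 2 ≤ ω m p * Ω m p q c := by
    rw [sq]; exact mul_le_mul (le_ω m p) (le_Ω hc) hm.le (ω_nonneg m p)
  calc F m q p c = p ^ 2 / (ω m p * Ω m p q c) * Real.exp (-(10 / 3) * p ^ 2 +
          -(8 / 3) * q * p * c + (-(ω m p) * Ω m p q c + ω m p * ω m q)) *
        (Real.exp (Ω m p q c * ω m q) / (ω m p + Ω m p q c - ω m q) +
          Real.exp (-(Ω m p q c) * ω m q) / (ω m p + Ω m p q c + ω m q)) := by
        unfold F; simp only [Real.exp_add]; ring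
    _ ≤ p ^ 2 / m ^ 2 * Real.exp (-(10 / 3) * p ^ 2 +
          -(8 / 3) * q * p * c + (-(ω m p) * Ω m p q c + ω m p * ω m q)) *
        (3 / m * Real.exp (Ω m p q c * ω m q)) := by
        gcongr
        · exact F_bracket_nonneg hm hq₂ hc
        · exact F_bracket_le hm hq₂ hc
    _ = 3 / m ^ 3 * p ^ 2 * Real.exp (-(10 / 3) * p ^ 2 +
          -(8 / 3) * q * p * c + (-(ω m p) * Ω m p q c + ω m p * ω m q) +
          Ω m p q c * ω m q) := by simp only [Real.exp_add]; field_simp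
    _ ≤ 3 / m ^ 3 * p ^ 2 * Real.exp (3 / 28 * (14 / 3 + 2 * m) ^ 2 + (2 * m + 1) * (1 + m) +
          -1 * p ^ 2) :=
        mul_le_mul_of_nonneg_left (Real.exp_le_exp.mpr (F_exponent_le hm.le hq₁ hc))
          (by positivity)
    _ = majorant m p := by unfold majorant; rw [Real.exp_add]; ring

@[fun_prop]
lemma continuous_ω (m : ℝ) : Continuous (ω m) := by unfold ω; fun_prop

@[fun_prop]
lemma continuous_Ω (m : ℝ) : Continuous fun x : ℝ × ℝ × ℝ => Ω m x.1 x.2.1 x.2.2 := by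
  unfold Ω; fun_prop

lemma measurable_uncurry_F (m q : ℝ) : Measurable (uncurry (F m q)) := by
  unfold uncurry F ω Ω; fun_prop

lemma continuousAt_F (hm : 0 < m) (p : ℝ) (hc : |c| ≤ 1) :
    ContinuousAt (fun q => F m q p c) 0 := by
  have h₀ : |(0 : ℝ)| ≤ m / 2 := by simpa using (half_pos hm).le
  have h₁ : ω m p * Ω m p 0 c ≠ 0 :=
    (mul_pos (hm.trans_le (le_ω m p)) (hm.trans_le (le_Ω hc))).ne'
  have h₂ : ω m p + Ω m p 0 c - ω m 0 ≠ 0 :=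
    ((half_pos hm).trans_le (half_le_ω_add_Ω_sub_ω h₀ hc)).ne'
  have h₃ : ω m p + Ω m p 0 c + ω m 0 ≠ 0 := by
    linarith [le_ω m p, le_Ω (m := m) (p := p) (q := 0) hc, le_ω m 0]
  unfold F
  fun_prop (disch := assumption)

end Integrand

lemma continuousAt_δE {m : ℝ} (hm : 0 < m) : ContinuousAt (δE m) 0 := by
  have h_small : ∀ᶠ q in 𝓝 (0 : ℝ), |q| ≤ 1 ∧ |q| ≤ m / 2 := by
    have h := eventually_abs_sub_lt (0 : ℝ) (lt_min one_pos (half_pos hm))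
    filter_upwards [h] with q hq
    simp only [sub_zero, lt_min_iff] at hq
    exact ⟨hq.1.le, hq.2.le⟩
  have h_integral : ContinuousAt
      (fun q => ∫ p in Ioi (0 : ℝ), ∫ c in (-1 : ℝ)..1, F m q p c) 0 := by
    refine continuousAt_integral_intervalIntegral_of_dominated
      (fun q => (measurable_uncurry_F m q).stronglyMeasurable) ?_
      (integrable_majorant m).integrableOn
      (fun p c hc => continuousAt_F hm p (abs_le_of_mem_uIoc_neg zero_le_one hc))
    filter_upwards [h_small] with q ⟨hq₁, hq₂⟩ p c hc
    rw [Real.norm_of_nonneg (F_nonneg hm hq₂ (abs_le_of_mem_uIoc_neg zero_le_one hc))]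
    exact F_le_majorant hm hq₁ hq₂ (abs_le_of_mem_uIoc_neg zero_le_one hc)
  have h_ω₀ : 16 * (2 * Real.pi) ^ 5 * ω m 0 ≠ 0 := by
    have := hm.trans_le (le_ω m 0)
    positivity
  have h_prefactor : ContinuousAt
      (fun q => Real.exp (-(10 / 3) * q ^ 2 - 2 * m) / (16 * (2 * Real.pi) ^ 5 * ω m q)) 0 := by
    fun_prop (disch := exact h_ω₀)
  exact h_prefactor.mul h_integral

theorem stmt8 (m : ℝ) (hm : 0 < m) :
    ∃ δm : ℝ, Filter.Tendsto (δE m) (nhdsWithin 0 (Set.Ioi (0 : ℝ))) (nhds δm) :=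
  ⟨δE m 0, (continuousAt_δE hm).tendsto.mono_left nhdsWithin_le_nhds⟩
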